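/- Let n, m, ℓ be positive integers with n ≥ 2 and m ≥ ℓ. Then 𝔷_n(−1,…,−1) (m entries) · 𝔷_n(−1,…,−1) (ℓ entries) = n² · Σ_{j=0}^{n−m−1} C(m−ℓ+2j, j) · 𝒴_n(2^{n−m−j−1}, 1^{m−ℓ+2j}). -/

import Mathlib

open Finset

/-- The primitive n-th root of unity ζ_n = exp(2πi/n). -/
noncomputable def zetaN (n : ℕ) : ℂ := Complex.exp (2 * Real.pi * Complex.I / n)

/-- The finite q-multiple harmonic sum 𝔷_n(s_1,…,s_m) for a list of integer exponents:
the sum over 1 ≤ i_1 < ⋯ < i_m ≤ n-1 of ∏_j (1 - ζ_n^{i_j})^{-s_j}. -/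
noncomputable def qhs (n : ℕ) (s : List ℤ) : ℂ :=
  ∑ t ∈ (Finset.Icc 1 (n - 1)).powersetCard s.length,
    (List.zipWith (fun i e => (1 - zetaN n ^ i) ^ (-e)) (t.sort (· ≤ ·)) s).prod

/-- Sum of 𝔷_n(σ) over all distinct rearrangements σ of the list L of exponents. -/
noncomputable def Yperm (n : ℕ) (L : List ℤ) : ℂ :=
  ∑ σ ∈ L.permutations.toFinset, qhs n σ

/-- 𝒴_n(3^a, 2^b, 1^c): the sum of 𝔷_n(σ) over all distinct rearrangements of a string of
a threes, b twos and c ones; interpreted as 0 if some block length is negative. -/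
noncomputable def Y3 (n : ℕ) (a b c : ℤ) : ℂ :=
  if 0 ≤ a ∧ 0 ≤ b ∧ 0 ≤ c then
    Yperm n (List.replicate a.toNat 3 ++ List.replicate b.toNat 2 ++ List.replicate c.toNat 1)
  else 0

/-- Binomial coefficient C(a,b) for integers, interpreted as 0 when b < 0 or b > a. -/
def ichoose (a b : ℤ) : ℤ :=
  if 0 ≤ b ∧ b ≤ a then (a.toNat).choose b.toNat else 0

set_option maxHeartbeats 1000000

lemma zipWith_replicate_right' {α β γ : Type*} (f : α → β → γ) (b : β) :
    ∀ (l : List α), List.zipWith f l (List.replicate l.length b) = l.map (fun a => f a b)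
  | [] => rfl
  | a :: l => by
      simp only [List.length_cons, List.replicate_succ, List.zipWith_cons_cons, List.map_cons]
      rw [zipWith_replicate_right' f b l]

lemma prod_sort_map {M : Type*} [CommMonoid M] (t : Finset ℕ) (g : ℕ → M) :
    ((t.sort (· ≤ ·)).map g).prod = ∏ i ∈ t, g i := by
  rw [← Finset.prod_map_toList]
  exact List.Perm.prod_eq ((Finset.sort_perm_toList (s := t) (r := (· ≤ ·))).map g)

lemma qhs_replicate (n k : ℕ) (s : ℤ) :
    qhs n (List.replicate k s)
      = ∑ t ∈ (Finset.Icc 1 (n - 1)).powersetCard k, ∏ i ∈ t, (1 - zetaN n ^ i) ^ (-s) := by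
  unfold qhs
  rw [List.length_replicate]
  refine Finset.sum_congr rfl fun t ht => ?_
  have hcard : (t.sort (· ≤ ·)).length = k := by
    rw [Finset.length_sort]; exact (Finset.mem_powersetCard.1 ht).2
  conv_lhs => rw [← hcard]
  rw [zipWith_replicate_right', prod_sort_map]

lemma zetaN_prim {n : ℕ} (hn : 2 ≤ n) : IsPrimitiveRoot (zetaN n) n := by
  have := Complex.isPrimitiveRoot_exp n (by omega)
  simpa [zetaN] using this

lemma prod_one_sub_zeta {n : ℕ} (hn : 2 ≤ n) :
    ∏ i ∈ Finset.Icc 1 (n - 1), (1 - zetaN n ^ i) = (n : ℂ) := by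
  obtain ⟨n', rfl⟩ : ∃ n', n = n' + 1 := ⟨n - 1, by omega⟩
  have hprim : IsPrimitiveRoot (zetaN (n' + 1)) (n' + 1) := zetaN_prim hn
  have h := hprim.prod_one_sub_pow_eq_order
  have hmap : Finset.Icc 1 (n' + 1 - 1)
      = Finset.map ⟨fun k => k + 1, add_left_injective 1⟩ (Finset.range n') := by
    ext x
    simp only [Finset.mem_Icc, Finset.mem_map, Finset.mem_range, Function.Embedding.coeFn_mk,
      Nat.add_sub_cancel]
    constructor
    · rintro ⟨h1, h2⟩; exact ⟨x - 1, by omega, by omega⟩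
    · rintro ⟨a, ha, rfl⟩; omega
  rw [hmap, Finset.prod_map]
  simp only [Function.Embedding.coeFn_mk]
  rw [h]
  push_cast
  ring

lemma one_sub_zeta_ne {n : ℕ} (hn : 2 ≤ n) {i : ℕ} (hi : i ∈ Finset.Icc 1 (n - 1)) :
    (1 : ℂ) - zetaN n ^ i ≠ 0 := by
  simp only [Finset.mem_Icc] at hi
  intro h
  have h1 : zetaN n ^ i = 1 := by linear_combination -h
  exact (zetaN_prim hn).pow_ne_one_of_pos_of_lt (by omega) (by omega) h1

lemma sum_powersetCard_compl (W : Finset ℕ) (x : ℕ → ℂ) (hx : ∀ i ∈ W, x i ≠ 0)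
    (k : ℕ) (hk : k ≤ W.card) :
    ∑ t ∈ W.powersetCard k, ∏ i ∈ t, x i
      = (∏ i ∈ W, x i) * ∑ t ∈ W.powersetCard (W.card - k), ∏ i ∈ t, (x i)⁻¹ := by
  rw [Finset.mul_sum]
  refine Finset.sum_nbij' (fun t => W \ t) (fun t => W \ t) ?_ ?_ ?_ ?_ ?_
  · intro t ht
    obtain ⟨hsub, hcard⟩ := Finset.mem_powersetCard.1 ht
    exact Finset.mem_powersetCard.2 ⟨Finset.sdiff_subset, by rw [Finset.card_sdiff_of_subset hsub, hcard]⟩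
  · intro t ht
    obtain ⟨hsub, hcard⟩ := Finset.mem_powersetCard.1 ht
    refine Finset.mem_powersetCard.2 ⟨Finset.sdiff_subset, ?_⟩
    rw [Finset.card_sdiff_of_subset hsub, hcard]
    omega
  · intro t ht
    obtain ⟨hsub, _⟩ := Finset.mem_powersetCard.1 ht
    show W \ (W \ t) = t
    rw [Finset.sdiff_sdiff_self_left, Finset.inter_eq_right.2 hsub]
  · intro t ht
    obtain ⟨hsub, _⟩ := Finset.mem_powersetCard.1 ht
    show W \ (W \ t) = t
    rw [Finset.sdiff_sdiff_self_left, Finset.inter_eq_right.2 hsub]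
  · intro t ht
    obtain ⟨hsub, _⟩ := Finset.mem_powersetCard.1 ht
    rw [← Finset.prod_sdiff hsub, mul_comm ((W \ t).prod x), mul_assoc, ← Finset.prod_mul_distrib]
    rw [Finset.prod_congr rfl (fun i hi => mul_inv_cancel₀ (hx i (Finset.sdiff_subset hi))),
      Finset.prod_const_one, mul_one]



lemma mem_perms_iff {B C : ℕ} {σ : List ℤ} :
    σ ∈ (List.replicate B (2:ℤ) ++ List.replicate C 1).permutations.toFinset ↔
      σ.count 2 = B ∧ σ.count 1 = C ∧ σ ⊆ [2, 1] := by
  rw [List.mem_toFinset, List.mem_permutations,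
    List.perm_replicate_append_replicate (by norm_num)]

lemma perms_decomp (B C : ℕ) (h : 0 < B + C) :
    (List.replicate B (2:ℤ) ++ List.replicate C 1).permutations.toFinset =
      (if 0 < B then
        ((List.replicate (B-1) (2:ℤ) ++ List.replicate C 1).permutations.toFinset).image
          (List.cons 2) else ∅)
      ∪ (if 0 < C then
        ((List.replicate B (2:ℤ) ++ List.replicate (C-1) 1).permutations.toFinset).image
          (List.cons 1) else ∅) := by
  ext σ
  rw [Finset.mem_union, mem_perms_iff]
  cases σ with
  | nil =>
      simp only [List.count_nil, List.nil_subset, and_true]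
      constructor
      · rintro ⟨h1, h2⟩; omega
      · rintro (h1 | h1) <;> (split_ifs at h1 <;> simp at h1)
  | cons x σ' =>
      constructor
      · rintro ⟨h2, h1, hsub⟩
        have hx : x ∈ ([2, 1] : List ℤ) := hsub List.mem_cons_self
        have hsub' : σ' ⊆ [2, 1] := fun a ha => hsub (List.mem_cons_of_mem x ha)
        simp only [List.mem_cons, List.not_mem_nil, or_false] at hx
        rcases hx with rfl | rfl
        · left
          have hB : 0 < B := by
            rw [← h2, List.count_cons_self]; omega
          rw [if_pos hB, Finset.mem_image]
          refine ⟨σ', mem_perms_iff.2 ⟨?_, ?_, hsub'⟩, rfl⟩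
          · rw [← h2, List.count_cons_self]; omega
          · rw [← h1, List.count_cons_of_ne (by norm_num)]
        · right
          have hC : 0 < C := by
            rw [← h1, List.count_cons_self]; omega
          rw [if_pos hC, Finset.mem_image]
          refine ⟨σ', mem_perms_iff.2 ⟨?_, ?_, hsub'⟩, rfl⟩
          · rw [← h2, List.count_cons_of_ne (by norm_num)]
          · rw [← h1, List.count_cons_self]; omega
      · rintro (h1 | h1)
        · split_ifs at h1 with hB
          · rw [Finset.mem_image] at h1
            obtain ⟨τ, hτ, heq⟩ := h1
            obtain ⟨hc2, hc1, hsub⟩ := mem_perms_iff.1 hτ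
            obtain ⟨rfl, rfl⟩ : x = 2 ∧ σ' = τ := by
              constructor <;> [exact (List.cons.injEq _ _ _ _ ▸ heq.symm).1;
                exact (List.cons.injEq _ _ _ _ ▸ heq.symm).2]
            refine ⟨?_, ?_, ?_⟩
            · rw [List.count_cons_self]; omega
            · rw [List.count_cons_of_ne (by norm_num)]; exact hc1
            · intro a ha
              rcases List.mem_cons.1 ha with rfl | ha
              · simp
              · exact hsub ha
          · simp at h1
        · split_ifs at h1 with hC
          · rw [Finset.mem_image] at h1
            obtain ⟨τ, hτ, heq⟩ := h1
            obtain ⟨hc2, hc1, hsub⟩ := mem_perms_iff.1 hτ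
            obtain ⟨rfl, rfl⟩ : x = 1 ∧ σ' = τ := by
              constructor <;> [exact (List.cons.injEq _ _ _ _ ▸ heq.symm).1;
                exact (List.cons.injEq _ _ _ _ ▸ heq.symm).2]
            refine ⟨?_, ?_, ?_⟩
            · rw [List.count_cons_of_ne (by norm_num)]; exact hc2
            · rw [List.count_cons_self]; omega
            · intro a ha
              rcases List.mem_cons.1 ha with rfl | ha
              · simp
              · exact hsub ha
          · simp at h1

lemma sum_perms_decomp (g : List ℤ → ℂ) (B C : ℕ) (h : 0 < B + C) :
    ∑ σ ∈ (List.replicate B (2:ℤ) ++ List.replicate C 1).permutations.toFinset, g σ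
      = (if 0 < B then
          ∑ σ ∈ (List.replicate (B-1) (2:ℤ) ++ List.replicate C 1).permutations.toFinset,
            g (2 :: σ) else 0)
        + (if 0 < C then
          ∑ σ ∈ (List.replicate B (2:ℤ) ++ List.replicate (C-1) 1).permutations.toFinset,
            g (1 :: σ) else 0) := by
  rw [perms_decomp B C h, Finset.sum_union]
  · congr 1
    · split_ifs with hB
      · rw [Finset.sum_image (by intro a _ b _ hab; exact (List.cons.injEq _ _ _ _ ▸ hab).2)]
      · simp
    · split_ifs with hC
      · rw [Finset.sum_image (by intro a _ b _ hab; exact (List.cons.injEq _ _ _ _ ▸ hab).2)]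
      · simp
  · rw [Finset.disjoint_left]
    intro σ h1 h2
    split_ifs at h1 h2
    · simp only [Finset.mem_image] at h1 h2
      obtain ⟨a, _, rfl⟩ := h1
      obtain ⟨b, _, hb⟩ := h2
      cases hb
    · exact absurd h2 (Finset.notMem_empty σ)
    · exact absurd h1 (Finset.notMem_empty σ)
    · exact absurd h1 (Finset.notMem_empty σ)

lemma sum_perms_zipWith (f : ℕ → ℤ → ℂ) (l : List ℕ) :
    ∀ (B C : ℕ), l.Nodup → l.length = B + C →
      ∑ σ ∈ (List.replicate B (2:ℤ) ++ List.replicate C 1).permutations.toFinset,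
          (List.zipWith f l σ).prod
        = ∑ A ∈ l.toFinset.powersetCard B,
            (∏ i ∈ A, f i 2) * ∏ i ∈ l.toFinset \ A, f i 1 := by
  induction l with
  | nil =>
      intro B C _ hlen
      obtain ⟨rfl, rfl⟩ : B = 0 ∧ C = 0 := by constructor <;> (simp at hlen; omega)
      simp
  | cons i l' ih =>
      intro B C hnd hlen
      have hnd' : l'.Nodup := (List.nodup_cons.1 hnd).2
      have hi : i ∉ l'.toFinset := by
        simp only [List.mem_toFinset]
        exact (List.nodup_cons.1 hnd).1
      have hlen' : l'.length + 1 = B + C := by simpa using hlen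
      have htF : (i :: l').toFinset = insert i l'.toFinset := List.toFinset_cons
      have hcard' : l'.toFinset.card = l'.length := List.toFinset_card_of_nodup hnd'
      rw [sum_perms_decomp _ B C (by omega), htF]
      have key2 : (if 0 < B then
            ∑ σ ∈ (List.replicate (B-1) (2:ℤ) ++ List.replicate C 1).permutations.toFinset,
              (List.zipWith f (i :: l') (2 :: σ)).prod else 0)
          = (if 0 < B then f i 2 * ∑ A ∈ l'.toFinset.powersetCard (B-1),
              (∏ x ∈ A, f x 2) * ∏ x ∈ l'.toFinset \ A, f x 1 else 0) := by
        split_ifs with hB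
        · simp only [List.zipWith_cons_cons, List.prod_cons]
          rw [← Finset.mul_sum, ih (B-1) C hnd' (by omega)]
        · rfl
      have key1 : (if 0 < C then
            ∑ σ ∈ (List.replicate B (2:ℤ) ++ List.replicate (C-1) 1).permutations.toFinset,
              (List.zipWith f (i :: l') (1 :: σ)).prod else 0)
          = (if 0 < C then f i 1 * ∑ A ∈ l'.toFinset.powersetCard B,
              (∏ x ∈ A, f x 2) * ∏ x ∈ l'.toFinset \ A, f x 1 else 0) := by
        split_ifs with hC
        · simp only [List.zipWith_cons_cons, List.prod_cons]
          rw [← Finset.mul_sum, ih B (C-1) hnd' (by omega)]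
        · rfl
      rw [key2, key1]
      cases B with
      | zero =>
          have hC : 0 < C := by omega
          rw [if_neg (lt_irrefl 0), if_pos hC]
          simp only [Finset.powersetCard_zero, Finset.sum_singleton, Finset.prod_empty,
            Finset.sdiff_empty, one_mul, zero_add]
          rw [Finset.prod_insert hi]
      | succ B' =>
          rw [if_pos (Nat.succ_pos B')]
          rw [Finset.powersetCard_succ_insert hi, Finset.sum_union, Finset.sum_image]
          · -- part 1 : A ⊆ l'.toFinset with card B'+1, i goes to the f·1 side
            have hpart1 : ∑ A ∈ l'.toFinset.powersetCard (B' + 1),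
                  (∏ x ∈ A, f x 2) * ∏ x ∈ insert i l'.toFinset \ A, f x 1
                = (if 0 < C then f i 1 * ∑ A ∈ l'.toFinset.powersetCard (B' + 1),
                    (∏ x ∈ A, f x 2) * ∏ x ∈ l'.toFinset \ A, f x 1 else 0) := by
              split_ifs with hC
              · rw [Finset.mul_sum]
                refine Finset.sum_congr rfl fun A hA => ?_
                obtain ⟨hAsub, _⟩ := Finset.mem_powersetCard.1 hA
                have hiA : i ∉ A := fun h => hi (hAsub h)
                rw [Finset.insert_sdiff_of_notMem _ hiA,
                  Finset.prod_insert (fun h => hi (Finset.mem_sdiff.1 h).1)]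
                ring
              · have hC0 : C = 0 := by omega
                have : l'.toFinset.powersetCard (B' + 1) = ∅ :=
                  Finset.powersetCard_eq_empty.2 (by omega)
                rw [this, Finset.sum_empty]
            have hpart2 : ∑ A ∈ l'.toFinset.powersetCard B',
                  (∏ x ∈ insert i A, f x 2) * ∏ x ∈ insert i l'.toFinset \ insert i A, f x 1
                = f i 2 * ∑ A ∈ l'.toFinset.powersetCard B',
                    (∏ x ∈ A, f x 2) * ∏ x ∈ l'.toFinset \ A, f x 1 := by
              rw [Finset.mul_sum]
              refine Finset.sum_congr rfl fun A hA => ?_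
              obtain ⟨hAsub, _⟩ := Finset.mem_powersetCard.1 hA
              have hiA : i ∉ A := fun h => hi (hAsub h)
              have hsd : insert i l'.toFinset \ insert i A = l'.toFinset \ A := by
                ext x
                simp only [Finset.mem_sdiff, Finset.mem_insert, not_or]
                constructor
                · rintro ⟨hx1, hx2, hx3⟩
                  rcases hx1 with rfl | hx1
                  · exact absurd rfl hx2
                  · exact ⟨hx1, hx3⟩
                · rintro ⟨hx1, hx3⟩
                  exact ⟨Or.inr hx1, fun h => hi (h ▸ hx1), hx3⟩
              rw [hsd, Finset.prod_insert hiA]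
              ring
            rw [hpart1, hpart2, Nat.add_sub_cancel]
            ring
          · intro a ha b hb hab
            obtain ⟨hasub, _⟩ := Finset.mem_powersetCard.1 ha
            obtain ⟨hbsub, _⟩ := Finset.mem_powersetCard.1 hb
            have hia : i ∉ a := fun h => hi (hasub h)
            have hib : i ∉ b := fun h => hi (hbsub h)
            rw [← Finset.erase_insert hia, hab, Finset.erase_insert hib]
          · rw [Finset.disjoint_left]
            intro A hA1 hA2
            obtain ⟨hAsub, _⟩ := Finset.mem_powersetCard.1 hA1
            rw [Finset.mem_image] at hA2
            obtain ⟨a, _, rfl⟩ := hA2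
            exact hi (hAsub (Finset.mem_insert_self i a))

lemma core_identity (W : Finset ℕ) (y : ℕ → ℂ) (p q : ℕ) (hpq : p ≤ q) :
    (∑ T ∈ W.powersetCard p, ∏ i ∈ T, y i) * (∑ U ∈ W.powersetCard q, ∏ i ∈ U, y i)
      = ∑ j ∈ Finset.range (p + 1), ((q - p + 2 * j).choose j : ℂ) *
          ∑ S ∈ W.powersetCard (q + j), ∑ A ∈ S.powersetCard (p - j),
            (∏ i ∈ A, (y i) ^ 2) * ∏ i ∈ S \ A, y i := by
  classical
  have main : ∑ x ∈ (W.powersetCard p).sigma (fun _ => W.powersetCard q),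
        ((∏ i ∈ x.1, y i) * ∏ i ∈ x.2, y i)
      = ∑ z ∈ (Finset.range (p+1)).sigma (fun j => (W.powersetCard (q+j)).sigma
            (fun S => (S.powersetCard (p-j)).sigma (fun A => (S \ A).powersetCard j))),
          ((∏ i ∈ z.2.2.1, (y i)^2) * ∏ i ∈ z.2.1 \ z.2.2.1, y i) := by
    refine Finset.sum_nbij'
      (fun x => ⟨(x.1 \ x.2).card, x.1 ∪ x.2, x.1 ∩ x.2, x.1 \ x.2⟩)
      (fun z => ⟨z.2.2.1 ∪ z.2.2.2, z.2.1 \ z.2.2.2⟩) ?_ ?_ ?_ ?_ ?_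
    · rintro ⟨T, U⟩ hx
      simp only [Finset.mem_sigma, Finset.mem_powersetCard, Finset.mem_range] at hx ⊢
      obtain ⟨⟨hTs, hTc⟩, hUs, hUc⟩ := hx
      have h1 : (T ∩ U).card + (T \ U).card = p := by
        rw [Finset.card_inter_add_card_sdiff, hTc]
      have h2 : (T ∪ U).card + (T ∩ U).card = p + q := by
        rw [Finset.card_union_add_card_inter, hTc, hUc]
      refine ⟨by omega, ⟨Finset.union_subset hTs hUs, by omega⟩,
        ⟨Finset.inter_subset_union, by omega⟩, ?_, trivial⟩
      intro x hxmem
      simp only [Finset.mem_sdiff, Finset.mem_union, Finset.mem_inter] at hxmem ⊢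
      obtain ⟨hxT, hxU⟩ := hxmem
      exact ⟨Or.inl hxT, fun h => hxU h.2⟩
    · rintro ⟨j, S, A, D⟩ hz
      simp only [Finset.mem_sigma, Finset.mem_powersetCard, Finset.mem_range] at hz ⊢
      obtain ⟨hj, ⟨hSs, hSc⟩, ⟨hAs, hAc⟩, hDs, hDc⟩ := hz
      have hDS : D ⊆ S := hDs.trans Finset.sdiff_subset
      have hAD : Disjoint A D := Finset.disjoint_left.2
        (fun x hxA hxD => (Finset.mem_sdiff.1 (hDs hxD)).2 hxA)
      constructor
      · refine ⟨Finset.union_subset (hAs.trans hSs) (hDS.trans hSs), ?_⟩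
        rw [Finset.card_union_of_disjoint hAD, hAc, hDc]
        omega
      · refine ⟨Finset.sdiff_subset.trans hSs, ?_⟩
        rw [Finset.card_sdiff_of_subset hDS, hSc, hDc]
        omega
    · rintro ⟨T, U⟩ hx
      simp only [Finset.mem_sigma, Finset.mem_powersetCard] at hx
      obtain ⟨⟨hTs, hTc⟩, hUs, hUc⟩ := hx
      have e1 : (T ∩ U) ∪ (T \ U) = T := by
        ext x
        simp only [Finset.mem_union, Finset.mem_inter, Finset.mem_sdiff]
        tauto
      have e2 : (T ∪ U) \ (T \ U) = U := by
        ext x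
        simp only [Finset.mem_union, Finset.mem_sdiff]
        tauto
      show (⟨(T ∩ U) ∪ (T \ U), (T ∪ U) \ (T \ U)⟩ : Σ _ : Finset ℕ, Finset ℕ) = ⟨T, U⟩
      rw [e1, e2]
    · rintro ⟨j, S, A, D⟩ hz
      simp only [Finset.mem_sigma, Finset.mem_powersetCard, Finset.mem_range] at hz
      obtain ⟨hj, ⟨hSs, hSc⟩, ⟨hAs, hAc⟩, hDs, hDc⟩ := hz
      have hDS : ∀ x, x ∈ D → x ∈ S := fun x hx => (hDs.trans Finset.sdiff_subset) hx
      have hAS : ∀ x, x ∈ A → x ∈ S := fun x hx => hAs hx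
      have hAD : ∀ x, x ∈ A → x ∉ D := fun x hxA hxD => (Finset.mem_sdiff.1 (hDs hxD)).2 hxA
      have e1 : (A ∪ D) \ (S \ D) = D := by
        ext x
        simp only [Finset.mem_union, Finset.mem_sdiff, not_and, not_not]
        constructor
        · rintro ⟨hx1, hx2⟩
          rcases hx1 with hx1 | hx1
          · exact hx2 (hAS x hx1)
          · exact hx1
        · intro hx
          exact ⟨Or.inr hx, fun _ => hx⟩
      have e2 : (A ∪ D) ∪ (S \ D) = S := by
        ext x
        simp only [Finset.mem_union, Finset.mem_sdiff]
        constructor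
        · rintro ((hx | hx) | ⟨hx, _⟩)
          · exact hAS x hx
          · exact hDS x hx
          · exact hx
        · intro hx
          by_cases hxD : x ∈ D
          · exact Or.inl (Or.inr hxD)
          · exact Or.inr ⟨hx, hxD⟩
      have e3 : (A ∪ D) ∩ (S \ D) = A := by
        ext x
        simp only [Finset.mem_union, Finset.mem_inter, Finset.mem_sdiff]
        constructor
        · rintro ⟨hx1 | hx1, _, hx3⟩
          · exact hx1
          · exact absurd hx1 hx3
        · intro hx
          exact ⟨Or.inl hx, hAS x hx, hAD x hx⟩
      show (⟨((A ∪ D) \ (S \ D)).card, (A ∪ D) ∪ (S \ D), (A ∪ D) ∩ (S \ D),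
          (A ∪ D) \ (S \ D)⟩ : Σ _ : ℕ, Σ _ : Finset ℕ, Σ _ : Finset ℕ, Finset ℕ)
        = ⟨j, S, A, D⟩
      rw [e1, e2, e3, hDc]
    · rintro ⟨T, U⟩ hx
      simp only [Finset.mem_sigma, Finset.mem_powersetCard] at hx
      obtain ⟨⟨hTs, hTc⟩, hUs, hUc⟩ := hx
      show (∏ i ∈ T, y i) * ∏ i ∈ U, y i
          = (∏ i ∈ T ∩ U, (y i)^2) * ∏ i ∈ (T ∪ U) \ (T ∩ U), y i
      have e4 : (T ∪ U) \ (T ∩ U) = (T \ U) ∪ (U \ T) := by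
        ext x
        simp only [Finset.mem_union, Finset.mem_sdiff, Finset.mem_inter]
        tauto
      have hdisj : Disjoint (T \ U) (U \ T) := Finset.disjoint_left.2
        (fun x hx1 hx2 => (Finset.mem_sdiff.1 hx1).2 (Finset.mem_sdiff.1 hx2).1)
      rw [e4, Finset.prod_union hdisj]
      have hT : (∏ i ∈ T ∩ U, y i) * ∏ i ∈ T \ U, y i = ∏ i ∈ T, y i :=
        Finset.prod_inter_mul_prod_diff T U y
      have hU : (∏ i ∈ U ∩ T, y i) * ∏ i ∈ U \ T, y i = ∏ i ∈ U, y i :=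
        Finset.prod_inter_mul_prod_diff U T y
      rw [← hT, ← hU, Finset.inter_comm U T]
      have hsq : ∏ i ∈ T ∩ U, (y i)^2 = (∏ i ∈ T ∩ U, y i) * ∏ i ∈ T ∩ U, y i := by
        rw [← Finset.prod_mul_distrib]
        exact Finset.prod_congr rfl fun x _ => sq (y x)
      rw [hsq]
      ring
  simp only [Finset.sum_sigma] at main
  rw [Finset.sum_mul_sum, main]
  refine Finset.sum_congr rfl fun j hj => ?_
  rw [Finset.mul_sum]
  refine Finset.sum_congr rfl fun S hS => ?_
  rw [Finset.mul_sum]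
  refine Finset.sum_congr rfl fun A hA => ?_
  have hSc : S.card = q + j := (Finset.mem_powersetCard.1 hS).2
  have hAs : A ⊆ S := (Finset.mem_powersetCard.1 hA).1
  have hAc : A.card = p - j := (Finset.mem_powersetCard.1 hA).2
  have hjp : j ≤ p := Nat.lt_succ_iff.1 (Finset.mem_range.1 hj)
  have hd : (S \ A).card = q - p + 2*j := by
    rw [Finset.card_sdiff_of_subset hAs, hSc, hAc]
    omega
  rw [Finset.sum_const, Finset.card_powersetCard, hd, nsmul_eq_mul]

lemma Yperm_eq (n B C : ℕ) :
    Yperm n (List.replicate B (2:ℤ) ++ List.replicate C 1)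
      = ∑ S ∈ (Finset.Icc 1 (n-1)).powersetCard (B + C),
          ∑ A ∈ S.powersetCard B,
            (∏ i ∈ A, ((1 - zetaN n ^ i)⁻¹)^2) * ∏ i ∈ S \ A, (1 - zetaN n ^ i)⁻¹ := by
  unfold Yperm
  have hstep : ∀ σ ∈ (List.replicate B (2:ℤ) ++ List.replicate C 1).permutations.toFinset,
      qhs n σ = ∑ t ∈ (Finset.Icc 1 (n-1)).powersetCard (B + C),
        (List.zipWith (fun i e => (1 - zetaN n ^ i) ^ (-e)) (t.sort (· ≤ ·)) σ).prod := by
    intro σ hσ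
    have hlen : σ.length = B + C := by
      have := (List.mem_permutations.1 (List.mem_toFinset.1 hσ)).length_eq
      simpa using this
    unfold qhs
    rw [hlen]
  rw [Finset.sum_congr rfl hstep, Finset.sum_comm]
  refine Finset.sum_congr rfl fun t ht => ?_
  have hcard : t.card = B + C := (Finset.mem_powersetCard.1 ht).2
  have h := sum_perms_zipWith (fun i e => (1 - zetaN n ^ i) ^ (-e)) (t.sort (· ≤ ·)) B C
      (Finset.sort_nodup (s := t) (r := (· ≤ ·))) (by rw [Finset.length_sort, hcard])
  rw [h, Finset.sort_toFinset]
  refine Finset.sum_congr rfl fun A hA => ?_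
  congr 1
  · refine Finset.prod_congr rfl fun x _ => ?_
    show (1 - zetaN n ^ x) ^ (-(2:ℤ)) = ((1 - zetaN n ^ x)⁻¹)^2
    rw [zpow_neg, inv_pow, show ((2:ℤ)) = ((2:ℕ):ℤ) from rfl, zpow_natCast]
  · refine Finset.prod_congr rfl fun x _ => ?_
    show (1 - zetaN n ^ x) ^ (-(1:ℤ)) = (1 - zetaN n ^ x)⁻¹
    rw [zpow_neg, zpow_one]


theorem stmt12 (n m ℓ : ℕ) (hn : 2 ≤ n) (hℓ : 1 ≤ ℓ) (hml : ℓ ≤ m) :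
    qhs n (List.replicate m (-1)) * qhs n (List.replicate ℓ (-1))
      = (n : ℂ) ^ 2 * ∑ j ∈ Finset.range (n - m),
          ((m - ℓ + 2 * j).choose j : ℂ) * Y3 n 0 ((n : ℤ) - m - j - 1) ((m : ℤ) - ℓ + 2 * j) := by
  by_cases hnm : n ≤ m
  · have h1 : qhs n (List.replicate m (-1)) = 0 := by
      unfold qhs
      rw [List.length_replicate]
      have he : (Finset.Icc 1 (n-1)).powersetCard m = ∅ :=
        Finset.powersetCard_eq_empty.2 (by rw [Nat.card_Icc]; omega)
      rw [he, Finset.sum_empty]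
    rw [h1, zero_mul, show n - m = 0 from by omega, Finset.range_zero, Finset.sum_empty,
      mul_zero]
  push_neg at hnm
  have hcardW : (Finset.Icc 1 (n - 1)).card = n - 1 := by rw [Nat.card_Icc]; omega
  have key : ∀ k : ℕ, k ≤ n - 1 → qhs n (List.replicate k (-1))
      = (n : ℂ) * ∑ t ∈ (Finset.Icc 1 (n-1)).powersetCard (n - 1 - k),
          ∏ i ∈ t, (1 - zetaN n ^ i)⁻¹ := by
    intro k hk
    rw [qhs_replicate]
    simp only [neg_neg, zpow_one]
    rw [sum_powersetCard_compl (Finset.Icc 1 (n-1)) _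
        (fun i hi => one_sub_zeta_ne hn hi) k (by rw [hcardW]; omega),
      prod_one_sub_zeta hn, hcardW]
  rw [key m (by omega), key ℓ (by omega)]
  have hco : (∑ T ∈ (Finset.Icc 1 (n-1)).powersetCard (n-1-m), ∏ i ∈ T, (1 - zetaN n ^ i)⁻¹)
        * (∑ U ∈ (Finset.Icc 1 (n-1)).powersetCard (n-1-ℓ), ∏ i ∈ U, (1 - zetaN n ^ i)⁻¹)
      = ∑ j ∈ Finset.range ((n-1-m) + 1), (((n-1-ℓ) - (n-1-m) + 2 * j).choose j : ℂ) *
          ∑ S ∈ (Finset.Icc 1 (n-1)).powersetCard ((n-1-ℓ) + j),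
            ∑ A ∈ S.powersetCard ((n-1-m) - j),
              (∏ i ∈ A, ((1 - zetaN n ^ i)⁻¹) ^ 2) * ∏ i ∈ S \ A, (1 - zetaN n ^ i)⁻¹ :=
    core_identity (Finset.Icc 1 (n-1)) (fun i => (1 - zetaN n ^ i)⁻¹) (n-1-m) (n-1-ℓ)
      (by omega)
  rw [show ∀ a b : ℂ, ((n:ℂ) * a) * ((n:ℂ) * b) = (n:ℂ)^2 * (a * b) from fun a b => by ring]
  rw [hco, show n - 1 - m + 1 = n - m from by omega]
  congr 1
  refine Finset.sum_congr rfl fun j hj => ?_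
  have hjlt : j < n - m := Finset.mem_range.1 hj
  have hcoef : n - 1 - ℓ - (n - 1 - m) + 2 * j = m - ℓ + 2 * j := by omega
  rw [hcoef]
  congr 1
  have hb : ((n:ℤ) - m - j - 1).toNat = n - 1 - m - j := by omega
  have hc : ((m:ℤ) - ℓ + 2 * j).toNat = m - ℓ + 2 * j := by omega
  have hY : Y3 n 0 ((n:ℤ) - m - j - 1) ((m:ℤ) - ℓ + 2 * j)
      = ∑ S ∈ (Finset.Icc 1 (n-1)).powersetCard ((n-1-ℓ) + j),
          ∑ A ∈ S.powersetCard (n-1-m-j),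
            (∏ i ∈ A, ((1 - zetaN n ^ i)⁻¹) ^ 2) * ∏ i ∈ S \ A, (1 - zetaN n ^ i)⁻¹ := by
    unfold Y3
    rw [if_pos ⟨le_refl (0:ℤ), by omega, by omega⟩]
    rw [hb, hc]
    simp only [Int.toNat_zero, List.replicate_zero, List.nil_append]
    rw [Yperm_eq n (n-1-m-j) (m - ℓ + 2*j),
      show (n-1-m-j) + (m - ℓ + 2*j) = (n-1-ℓ) + j from by omega]
  rw [hY]
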